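/- Let Y have an integrable distribution with continuous strictly increasing CDF F_Y and density f_Y, and let q ∈ (0,1) with ∫_{F_Y^{-1}(q)}^{∞} f_Y(y) dy = 1 − q > 0. If Y₁, Y₂, … are i.i.d. copies of Y, then the conditional expectation E[Y | Y ≥ F_Y^{-1}(q)] equals (∫_{F_Y^{-1}(q)}^{∞} y f_Y(y) dy)/(1−q), and (1/(n − ⌈nq⌉ + 1)) ∑_{j : Y_j ≥ F_Y^{-1}(q)} Y_j converges in probability to this value as n → ∞. -/

import Mathlib

open MeasureTheory ProbabilityTheory Filter
open scoped NNReal ENNReal Topology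

theorem upper_tail_average_convergence {Ω : Type*} [MeasurableSpace Ω]
    (μ : Measure Ω) [IsProbabilityMeasure μ]
    (ν : Measure ℝ) [IsProbabilityMeasure ν]
    (Y : ℕ → Ω → ℝ) (hmY : ∀ j, Measurable (Y j))
    (hiid : ∀ j, Measure.map (Y j) μ = ν)
    (hindep : iIndepFun Y μ)
    (f : ℝ → ℝ) (hfmeas : Measurable f) (hf0 : ∀ y, 0 ≤ f y)
    (hdens : ∀ s : Set ℝ, MeasurableSet s → ν s = ENNReal.ofReal (∫ y in s, f y))
    (hint : Integrable (fun y : ℝ => y) ν)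
    (F : ℝ → ℝ) (hF : ∀ r, F r = (ν (Set.Iic r)).toReal)
    (hFmono : StrictMono F) (hFcont : Continuous F)
    (q : ℝ) (hq : q ∈ Set.Ioo (0 : ℝ) 1)
    (m : ℝ) (hm : F m = q)
    (htail : ∫ y in Set.Ici m, f y = 1 - q)
    (L : ℝ) (hL : L = (∫ y in Set.Ici m, y * f y) / (1 - q)) :
    (∫ y, y ∂(ν[|Set.Ici m])) = L ∧
      ∀ ε > 0,
        Tendsto (fun N : ℕ =>
          (μ {ω | ε ≤
            |(∑ j ∈ Finset.range N, if m ≤ Y j ω then Y j ω else 0) /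
              ((N : ℝ) - ⌈(N : ℝ) * q⌉ + 1) - L|}).toReal)
          atTop (nhds 0) := by
  obtain ⟨hq0, hq1⟩ := hq
  have h1q : (0:ℝ) < 1 - q := by linarith
  -- f is integrable
  have hfint : Integrable f := by
    by_contra h
    have h1 := hdens Set.univ MeasurableSet.univ
    rw [Measure.restrict_univ, integral_undef h] at h1
    simp [measure_univ] at h1
  -- ν is the measure with density f
  have hν : ν = (volume : Measure ℝ).withDensity (fun y => ENNReal.ofReal (f y)) := by
    ext s hs
    rw [hdens s hs, withDensity_apply _ hs,
      ofReal_integral_eq_lintegral_ofReal (hfint.restrict) (ae_of_all _ hf0)]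
  set I := ∫ y in Set.Ici m, y * f y with hI
  have hνIci : ν (Set.Ici m) = ENNReal.ofReal (1 - q) := by
    rw [hdens _ measurableSet_Ici, htail]
  -- integral of y over the upper tail w.r.t. ν
  have hIci : ∫ y in Set.Ici m, y ∂ν = I := by
    rw [hν]
    have hcoe : (fun y : ℝ => ENNReal.ofReal (f y)) =
        fun y => (((f y).toNNReal : ℝ≥0) : ℝ≥0∞) := rfl
    rw [hcoe, setIntegral_withDensity_eq_setIntegral_smul hfmeas.real_toNNReal
      (fun y : ℝ => y) measurableSet_Ici]
    refine setIntegral_congr_fun measurableSet_Ici fun y _ => ?_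
    simp [NNReal.smul_def, Real.coe_toNNReal _ (hf0 y), mul_comm]
  -- Part 1
  have part1 : (∫ y, y ∂(ν[|Set.Ici m])) = L := by
    rw [ProbabilityTheory.cond, integral_smul_measure, hνIci, hL, ← hIci]
    rw [ENNReal.toReal_inv, ENNReal.toReal_ofReal h1q.le]
    rw [smul_eq_mul, div_eq_inv_mul]
  refine ⟨part1, ?_⟩
  -- Part 2
  set g : ℝ → ℝ := fun y => if m ≤ y then y else 0 with hg
  have hgmeas : Measurable g :=
    Measurable.ite (measurableSet_Ici) measurable_id measurable_const
  have hgind : g = Set.indicator (Set.Ici m) (fun y : ℝ => y) := by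
    funext y; simp [hg, Set.indicator, Set.mem_Ici]
  have hgν : Integrable g ν := by
    rw [hgind]; exact hint.indicator measurableSet_Ici
  have hgmean : ∫ y, g y ∂ν = I := by
    rw [hgind, integral_indicator measurableSet_Ici, hIci]
  set Z : ℕ → Ω → ℝ := fun j ω => if m ≤ Y j ω then Y j ω else 0 with hZ
  have hZg : ∀ j, Z j = g ∘ Y j := fun j => rfl
  have hZmeas : ∀ j, Measurable (Z j) := fun j => hgmeas.comp (hmY j)
  have hZint : Integrable (Z 0) μ := by
    rw [hZg 0]
    rw [← integrable_map_measure (by rw [hiid 0]; exact hgν.aestronglyMeasurable)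
      (hmY 0).aemeasurable, hiid 0]
    exact hgν
  have hZindep : Pairwise (Function.onFun (IndepFun · · μ) Z) := fun i j hij =>
    (hindep.indepFun hij).comp hgmeas hgmeas
  have hZident : ∀ i, IdentDistrib (Z i) (Z 0) μ μ := fun i => by
    rw [hZg i, hZg 0]
    exact (IdentDistrib.comp ⟨(hmY i).aemeasurable, (hmY 0).aemeasurable,
      by rw [hiid i, hiid 0]⟩ hgmeas)
  have hZmean : ∫ ω, Z 0 ω ∂μ = I := by
    have h := integral_map (hmY 0).aemeasurable
      (f := g) (by rw [hiid 0]; exact hgν.aestronglyMeasurable)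
    rw [hiid 0, hgmean] at h
    rw [hZg 0]
    exact h.symm
  have hslln := strong_law_ae_real Z hZint hZindep hZident
  rw [hZmean] at hslln
  -- denominator asymptotics
  have hceil : Tendsto (fun N : ℕ => (⌈(N:ℝ)*q⌉ : ℝ) / N) atTop (𝓝 q) := by
    have hub : Tendsto (fun N : ℕ => q + 1 / (N:ℝ)) atTop (𝓝 q) := by
      have := tendsto_one_div_atTop_nhds_zero_nat (𝕜 := ℝ)
      simpa using tendsto_const_nhds.add this
    refine tendsto_of_tendsto_of_tendsto_of_le_of_le' tendsto_const_nhds hub ?_ ?_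
    · filter_upwards [eventually_ge_atTop 1] with N hN
      have hNpos : (0:ℝ) < N := by exact_mod_cast hN
      rw [le_div_iff₀ hNpos, mul_comm]
      exact Int.le_ceil _
    · filter_upwards [eventually_ge_atTop 1] with N hN
      have hNpos : (0:ℝ) < N := by exact_mod_cast hN
      rw [div_le_iff₀ hNpos]
      have h1 : (⌈(N:ℝ)*q⌉ : ℝ) < (N:ℝ)*q + 1 := Int.ceil_lt_add_one _
      have : (q + 1/(N:ℝ)) * N = N*q + 1 := by field_simp
      linarith
  have hden : Tendsto (fun N : ℕ => ((N:ℝ) - ⌈(N:ℝ)*q⌉ + 1) / N) atTop (𝓝 (1 - q)) := by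
    have h2 : Tendsto (fun N : ℕ => 1 - (⌈(N:ℝ)*q⌉ : ℝ)/N + 1/(N:ℝ)) atTop
        (𝓝 (1 - q + 0)) := by
      exact (tendsto_const_nhds.sub hceil).add tendsto_one_div_atTop_nhds_zero_nat
    rw [add_zero] at h2
    refine Tendsto.congr' ?_ h2
    filter_upwards [eventually_ge_atTop 1] with N hN
    have hNpos : (0:ℝ) < N := by exact_mod_cast hN
    field_simp
  -- a.e. convergence of the ratio
  have hae : ∀ᵐ ω ∂μ, Tendsto
      (fun N : ℕ => (∑ j ∈ Finset.range N, Z j ω) / ((N:ℝ) - ⌈(N:ℝ)*q⌉ + 1))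
      atTop (𝓝 L) := by
    filter_upwards [hslln] with ω hω
    have hLval : L = I / (1 - q) := hL
    have hdiv : Tendsto (fun N : ℕ =>
        ((∑ j ∈ Finset.range N, Z j ω) / N) / (((N:ℝ) - ⌈(N:ℝ)*q⌉ + 1) / N))
        atTop (𝓝 (I / (1 - q))) := hω.div hden (ne_of_gt h1q)
    rw [← hLval] at hdiv
    refine Tendsto.congr' ?_ hdiv
    filter_upwards [eventually_ge_atTop 1] with N hN
    have hNne : (N:ℝ) ≠ 0 := by positivity
    rw [div_div_div_cancel_right₀ hNne]
  -- convergence in measure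
  have htim : TendstoInMeasure μ
      (fun N ω => (∑ j ∈ Finset.range N, Z j ω) / ((N:ℝ) - ⌈(N:ℝ)*q⌉ + 1))
      atTop (fun _ => L) := by
    refine tendstoInMeasure_of_tendsto_ae (fun N => ?_) hae
    exact ((Finset.measurable_sum _ fun j _ => hZmeas j).div_const _).aestronglyMeasurable
  intro ε hε
  have h := htim (ENNReal.ofReal ε) (by simpa using hε)
  have h' : Tendsto (fun N : ℕ =>
      μ {ω | ε ≤ |(∑ j ∈ Finset.range N, Z j ω) / ((N:ℝ) - ⌈(N:ℝ)*q⌉ + 1) - L|})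
      atTop (𝓝 0) := by
    simpa [edist_dist, Real.dist_eq, ENNReal.ofReal_le_ofReal_iff] using h
  have := (ENNReal.tendsto_toReal (by simp : (0:ENNReal) ≠ ⊤)).comp h'
  exact this
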